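/- arXiv:1306.2452 — 4 statements merged into one kernel-verified Lean document; each statement's English description precedes it below -/
import Mathlib

section
/- Let $K : \mathbb{R}^d \to \mathbb{R}$ be a nonnegative integrable kernel with $\int K(v)\,dv = 1$ and $\int v K(v)\,dv = 0$, and let $p : \mathbb{R}^d \to \mathbb{R}$ be a twice continuously differentiable function whose second derivatives satisfy $|\partial^\beta p(x)| \le C_1 e^{-\gamma |x|^2}$ for all multi-indices $|\beta| = 2$. Suppose further $K(v) \le C e^{-\alpha |v|^{2+\beta_0}}$ for some $C, \alpha > 0$, $\beta_0 \ge 0$. Then for the smoothing error $r_\epsilon(x) := \int K(v)\, p(x + \epsilon v)\,dv - p(x)$, there are constants $\widetilde{C}, \gamma', \epsilon_0 > 0$ such that $|r_\epsilon(x)| \le \widetilde{C} \epsilon^2 e^{-\gamma' |x|^2}$ for all $0 < \epsilon < \epsilon_0$ and all $x \in \mathbb{R}^d$. -/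
/-!
Since `K` has unit mass and vanishing first moment, `r_ε(x) = ∫ K v * R(x, ε v) dv`, where
`R(x, h) = p (x + h) - p x - Dp(x) h` is the second-order Taylor remainder. On the segment from
`x` to `x + h` we have `‖x‖² ≤ 2‖z‖² + 2‖h‖²`, so the Gaussian bound on the Hessian gives
`|R(x, h)| ≤ C₁ e^{-γ‖x‖²/2} e^{γ‖h‖²} ‖h‖²`. For `γ ε² ≤ α / 4` the factor `e^{γ ε² ‖v‖²}` is
absorbed by the super-Gaussian decay of `K`, which leaves `ε² e^{-γ‖x‖²/2}` times the finite
integral of `K v ‖v‖² e^{α‖v‖²/4}`.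
-/

open MeasureTheory Real

theorem norm_sub_sub_fderiv_le_of_norm_iteratedFDeriv_two_le
    {E F : Type*} [NormedAddCommGroup E] [NormedSpace ℝ E] [NormedAddCommGroup F]
    [NormedSpace ℝ F] {f : E → F} (hf : ContDiff ℝ 2 f) {x h : E} {M : ℝ}
    (hM : ∀ z ∈ segment ℝ x (x + h), ‖iteratedFDeriv ℝ 2 f z‖ ≤ M) :
    ‖f (x + h) - f x - fderiv ℝ f x h‖ ≤ M * ‖h‖ ^ 2 := by
  have hf' : Differentiable ℝ (fderiv ℝ f) :=
    (hf.fderiv_right (m := 1) le_rfl).differentiable one_ne_zero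
  have hM' : ∀ z ∈ segment ℝ x (x + h), ‖fderiv ℝ (fderiv ℝ f) z‖ ≤ M := fun z hz => by
    simpa [← norm_iteratedFDeriv_one, norm_iteratedFDeriv_fderiv] using hM z hz
  have hlip : ∀ z ∈ segment ℝ x (x + h), ‖fderiv ℝ f z - fderiv ℝ f x‖ ≤ M * ‖h‖ := by
    intro z hz
    calc ‖fderiv ℝ f z - fderiv ℝ f x‖ ≤ M * ‖z - x‖ :=
          (convex_segment _ _).norm_image_sub_le_of_norm_fderiv_le (fun w _ => hf' w) hM'
            (left_mem_segment ℝ _ _) hz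
      _ ≤ M * ‖h‖ := by
          gcongr
          · exact (norm_nonneg _).trans (hM x (left_mem_segment ℝ _ _))
          · simpa using norm_sub_le_of_mem_segment hz
  have := (convex_segment x (x + h)).norm_image_sub_le_of_norm_fderiv_le'
    (fun w _ => (hf.differentiable two_ne_zero) w) hlip
    (left_mem_segment ℝ _ _) (right_mem_segment ℝ _ _)
  simpa [pow_two, mul_assoc] using this

theorem exp_neg_mul_norm_sq_le {E : Type*} [SeminormedAddCommGroup E] {γ r : ℝ} (hγ : 0 ≤ γ)
    {x z : E} (hxz : ‖x - z‖ ≤ r) :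
    exp (-γ * ‖z‖ ^ 2) ≤ exp (-(γ / 2) * ‖x‖ ^ 2) * exp (γ * r ^ 2) := by
  rw [← exp_add, exp_le_exp]
  have hx : ‖x‖ ≤ ‖z‖ + r := by
    simpa using (norm_le_norm_add_norm_sub' x z).trans (by linarith)
  have hsq : ‖x‖ ^ 2 ≤ 2 * ‖z‖ ^ 2 + 2 * r ^ 2 := by
    nlinarith [norm_nonneg x, sq_nonneg (‖z‖ - r)]
  nlinarith

theorem norm_sub_sub_fderiv_le_of_norm_iteratedFDeriv_two_le_mul_exp
    {E F : Type*} [NormedAddCommGroup E] [NormedSpace ℝ E] [NormedAddCommGroup F]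
    [NormedSpace ℝ F] {p : E → F} {C₁ γ : ℝ} (hp : ContDiff ℝ 2 p) (hC₁ : 0 ≤ C₁) (hγ : 0 ≤ γ)
    (hp2 : ∀ x, ‖iteratedFDeriv ℝ 2 p x‖ ≤ C₁ * exp (-γ * ‖x‖ ^ 2)) (x h : E) :
    ‖p (x + h) - p x - fderiv ℝ p x h‖ ≤
      C₁ * exp (-(γ / 2) * ‖x‖ ^ 2) * exp (γ * ‖h‖ ^ 2) * ‖h‖ ^ 2 := by
  refine norm_sub_sub_fderiv_le_of_norm_iteratedFDeriv_two_le hp fun z hz => ?_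
  have hxz : ‖x - z‖ ≤ ‖h‖ := by simpa [norm_sub_rev] using norm_sub_le_of_mem_segment hz
  calc ‖iteratedFDeriv ℝ 2 p z‖ ≤ C₁ * exp (-γ * ‖z‖ ^ 2) := hp2 z
    _ ≤ C₁ * (exp (-(γ / 2) * ‖x‖ ^ 2) * exp (γ * ‖h‖ ^ 2)) := by
        gcongr; exact exp_neg_mul_norm_sq_le hγ hxz
    _ = C₁ * exp (-(γ / 2) * ‖x‖ ^ 2) * exp (γ * ‖h‖ ^ 2) := by ring

theorem exp_neg_mul_rpow_le {α β₀ r : ℝ} (hα : 0 ≤ α) (hβ₀ : 0 ≤ β₀) (hr : 0 ≤ r) :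
    exp (-α * r ^ (2 + β₀)) ≤ exp α * exp (-α * r ^ 2) := by
  rw [← exp_add, exp_le_exp]
  have : r ^ 2 ≤ r ^ (2 + β₀) + 1 := by
    rcases le_total r 1 with hr1 | hr1
    · nlinarith [rpow_nonneg hr (2 + β₀)]
    · have := rpow_le_rpow_of_exponent_le hr1 (show (2 : ℝ) ≤ 2 + β₀ by linarith)
      norm_cast at this
      linarith
  nlinarith

theorem sq_mul_exp_le {b r : ℝ} (hb : 0 < b) :
    r ^ 2 * exp (b * r ^ 2) ≤ b⁻¹ * exp (2 * b * r ^ 2) := by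
  have hr : r ^ 2 ≤ b⁻¹ * exp (b * r ^ 2) := by
    rw [le_inv_mul_iff₀ hb]
    linarith [add_one_le_exp (b * r ^ 2)]
  calc r ^ 2 * exp (b * r ^ 2) ≤ b⁻¹ * exp (b * r ^ 2) * exp (b * r ^ 2) := by gcongr
    _ = b⁻¹ * exp (2 * b * r ^ 2) := by rw [mul_assoc, ← exp_add]; ring_nf

section Gaussian

variable {V : Type*} [NormedAddCommGroup V] [InnerProductSpace ℝ V] [FiniteDimensional ℝ V]
  [MeasurableSpace V] [BorelSpace V]

theorem integrable_exp_neg_mul_sq_norm {b : ℝ} (hb : 0 < b) :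
    Integrable (fun v : V => exp (-b * ‖v‖ ^ 2)) := by
  have := (GaussianFourier.integrable_cexp_neg_mul_sq_norm_add
    (V := V) (b := (b : ℂ)) (by simpa using hb) 0 0).norm
  refine this.congr (ae_of_all _ fun v => ?_)
  simp only [zero_mul, add_zero, Complex.norm_exp]
  norm_cast

variable {K : V → ℝ} {C α β₀ : ℝ}

theorem integrable_mul_norm_sq_mul_exp_of_le_exp_neg_rpow (hKm : AEStronglyMeasurable K)
    (hK0 : ∀ v, 0 ≤ K v) (hC : 0 ≤ C) (hα : 0 < α) (hβ₀ : 0 ≤ β₀)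
    (hKtail : ∀ v, K v ≤ C * exp (-α * ‖v‖ ^ (2 + β₀))) :
    Integrable (fun v => K v * (‖v‖ ^ 2 * exp (α / 4 * ‖v‖ ^ 2))) := by
  refine ((integrable_exp_neg_mul_sq_norm (V := V) (b := α / 2) (by positivity)).const_mul
    (C * exp α * (α / 4)⁻¹)).mono' ?_ (ae_of_all _ fun v => ?_)
  · exact hKm.mul (by fun_prop)
  have hK : K v ≤ C * exp α * exp (-α * ‖v‖ ^ 2) := by
    rw [mul_assoc]
    exact (hKtail v).trans (by gcongr; exact exp_neg_mul_rpow_le hα.le hβ₀ (norm_nonneg v))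
  rw [norm_of_nonneg (mul_nonneg (hK0 v) (by positivity))]
  calc K v * (‖v‖ ^ 2 * exp (α / 4 * ‖v‖ ^ 2))
      ≤ C * exp α * exp (-α * ‖v‖ ^ 2) * ((α / 4)⁻¹ * exp (2 * (α / 4) * ‖v‖ ^ 2)) :=
        mul_le_mul hK (sq_mul_exp_le (by positivity)) (by positivity) (by positivity)
    _ = C * exp α * (α / 4)⁻¹ * exp (-(α / 2) * ‖v‖ ^ 2) := by
        rw [mul_mul_mul_comm, ← exp_add]; ring_nf

theorem integrable_smul_self_of_integrable_mul_norm_sq_mul_exp {b : ℝ} (hb : 0 ≤ b)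
    (hK : Integrable K) (hK0 : ∀ v, 0 ≤ K v)
    (hW : Integrable (fun v => K v * (‖v‖ ^ 2 * exp (b * ‖v‖ ^ 2)))) :
    Integrable (fun v => K v • v) := by
  refine (hK.add hW).mono' (hK.aestronglyMeasurable.smul aestronglyMeasurable_id)
    (ae_of_all _ fun v => ?_)
  rw [norm_smul, norm_of_nonneg (hK0 v)]
  have h1 : ‖v‖ ≤ 1 + ‖v‖ ^ 2 := by nlinarith [sq_nonneg (‖v‖ - 1)]
  have h2 : 1 ≤ exp (b * ‖v‖ ^ 2) := one_le_exp (by positivity)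
  have := hK0 v
  show K v * ‖v‖ ≤ K v + K v * (‖v‖ ^ 2 * exp (b * ‖v‖ ^ 2))
  nlinarith [mul_nonneg this (sq_nonneg ‖v‖)]

end Gaussian

theorem integral_mul_sub_eq_integral_mul_sub_sub {V Ω : Type*} [NormedAddCommGroup V]
    [NormedSpace ℝ V] [CompleteSpace V] [MeasurableSpace Ω] {μ : Measure Ω} {K g : Ω → ℝ}
    {X : Ω → V} {c : ℝ}
    (L : V →L[ℝ] ℝ) (hK : Integrable K μ) (hK1 : ∫ ω, K ω ∂μ = 1)
    (hmom : Integrable (fun ω => K ω • X ω) μ) (hKmom : ∫ ω, K ω • X ω ∂μ = 0)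
    (hg : Integrable (fun ω => K ω * (g ω - c - L (X ω))) μ) :
    ∫ ω, K ω * g ω ∂μ - c = ∫ ω, K ω * (g ω - c - L (X ω)) ∂μ := by
  have hsplit : ∀ ω, K ω * g ω = K ω * (g ω - c - L (X ω)) + (K ω * c + L (K ω • X ω)) := by
    intro ω; rw [map_smul, smul_eq_mul]; ring
  have hKc : Integrable (fun ω => K ω * c) μ := hK.mul_const c
  have hLX : Integrable (fun ω => L (K ω • X ω)) μ := L.integrable_comp hmom
  have hKcLX : Integrable (fun ω => K ω * c + L (K ω • X ω)) μ := hKc.add hLX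
  rw [integral_congr_ae (ae_of_all _ hsplit), integral_add hg hKcLX,
    integral_add hKc hLX, integral_mul_const, hK1,
    L.integral_comp_comm hmom, hKmom]
  simp

theorem stmt2 (d : ℕ)
    (K : EuclideanSpace ℝ (Fin d) → ℝ) (p : EuclideanSpace ℝ (Fin d) → ℝ)
    (C₁ γ C α β₀ : ℝ) (hC₁ : 0 < C₁) (hγ : 0 < γ) (hC : 0 < C) (hα : 0 < α)
    (hβ₀ : 0 ≤ β₀)
    (hK0 : ∀ v, 0 ≤ K v) (hKint : Integrable K)
    (hK1 : ∫ v, K v = 1)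
    (hKmom : ∫ v, K v • v = (0 : EuclideanSpace ℝ (Fin d)))
    (hp : ContDiff ℝ 2 p)
    (hp2 : ∀ x, ‖iteratedFDeriv ℝ 2 p x‖ ≤ C₁ * Real.exp (-γ * ‖x‖ ^ 2))
    (hKtail : ∀ v, K v ≤ C * Real.exp (-α * ‖v‖ ^ (2 + β₀))) :
    ∃ Ct γ' ε₀ : ℝ, 0 < Ct ∧ 0 < γ' ∧ 0 < ε₀ ∧
      ∀ ε : ℝ, 0 < ε → ε < ε₀ → ∀ x,
        |(∫ v, K v * p (x + ε • v)) - p x| ≤ Ct * ε ^ 2 * Real.exp (-γ' * ‖x‖ ^ 2) := by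
  set W := fun v : EuclideanSpace ℝ (Fin d) => K v * (‖v‖ ^ 2 * exp (α / 4 * ‖v‖ ^ 2))
  have hW : Integrable W := integrable_mul_norm_sq_mul_exp_of_le_exp_neg_rpow
    hKint.aestronglyMeasurable hK0 hC.le hα hβ₀ hKtail
  have hmom : Integrable (fun v => K v • v) :=
    integrable_smul_self_of_integrable_mul_norm_sq_mul_exp (by positivity) hKint hK0 hW
  have hW0 : 0 ≤ ∫ v, W v := integral_nonneg fun v => mul_nonneg (hK0 v) (by positivity)
  refine ⟨C₁ * (∫ v, W v) + 1, γ / 2, sqrt (α / (4 * γ)), by positivity, by positivity,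
    by positivity, fun ε hε hεlt x => ?_⟩
  have hεγ : γ * ε ^ 2 ≤ α / 4 := by
    have := pow_le_pow_left₀ hε.le hεlt.le 2
    rw [sq_sqrt (by positivity)] at this
    calc γ * ε ^ 2 ≤ γ * (α / (4 * γ)) := by gcongr
      _ = α / 4 := by field_simp
  set c := C₁ * exp (-(γ / 2) * ‖x‖ ^ 2) * ε ^ 2
  set L := ε • fderiv ℝ p x
  have hbound : ∀ v, ‖K v * (p (x + ε • v) - p x - L v)‖ ≤ c * W v := by
    intro v
    have hTaylor :=
      norm_sub_sub_fderiv_le_of_norm_iteratedFDeriv_two_le_mul_exp hp hC₁.le hγ.le hp2 x (ε • v)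
    rw [norm_smul, norm_of_nonneg hε.le] at hTaylor
    have hL : L v = fderiv ℝ p x (ε • v) := by simp [L, map_smul]
    rw [norm_mul, norm_of_nonneg (hK0 v), hL]
    have hexp : exp (γ * (ε * ‖v‖) ^ 2) ≤ exp (α / 4 * ‖v‖ ^ 2) := by
      rw [mul_pow, ← mul_assoc]; gcongr
    calc K v * ‖p (x + ε • v) - p x - fderiv ℝ p x (ε • v)‖
        ≤ K v * (C₁ * exp (-(γ / 2) * ‖x‖ ^ 2) * exp (α / 4 * ‖v‖ ^ 2) * (ε * ‖v‖) ^ 2) := by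
          gcongr
          · exact hK0 v
          · exact hTaylor.trans (by gcongr)
      _ = c * W v := by simp only [c, W]; ring
  have hR : Integrable (fun v => K v * (p (x + ε • v) - p x - L v)) :=
    (hW.const_mul c).mono' (hKint.aestronglyMeasurable.mul
      (Continuous.aestronglyMeasurable (by have := hp.continuous; fun_prop))) (ae_of_all _ hbound)
  rw [integral_mul_sub_eq_integral_mul_sub_sub L hKint hK1 hmom hKmom hR, ← norm_eq_abs]
  calc ‖∫ v, K v * (p (x + ε • v) - p x - L v)‖ ≤ ∫ v, c * W v :=
        norm_integral_le_of_norm_le (hW.const_mul c) (ae_of_all _ hbound)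
    _ = C₁ * (∫ v, W v) * ε ^ 2 * exp (-(γ / 2) * ‖x‖ ^ 2) := by
        rw [integral_const_mul]; ring
    _ ≤ (C₁ * (∫ v, W v) + 1) * ε ^ 2 * exp (-(γ / 2) * ‖x‖ ^ 2) := by gcongr; linarith
end

section
/- Let $(Z_{nm})_{1 \le n \le N, 1 \le m \le M}$ be real square-integrable random variables such that $Z_{nm}$ and $Z_{n'm'}$ are independent whenever $n \ne n'$ and $m \ne m'$, all $Z_{nm}$ have common mean $h$, common second moment, and the covariances $\mathbb{E}[Z_{nm}Z_{nm'}] =: h^{(1,2)}$ (for $m \ne m'$) and $\mathbb{E}[Z_{nm}Z_{n'm}] =: h^{(2,1)}$ (for $n \ne n'$) do not depend on the indices chosen. Then the sample mean $\widehat{h} := \frac{1}{NM}\sum_{n=1}^N\sum_{m=1}^M Z_{nm}$ satisfies $\operatorname{Var}(\widehat{h}) = \frac{1-M-N}{NM}h^2 + \frac{M-1}{NM}h^{(1,2)} + \frac{N-1}{NM}h^{(2,1)} + \frac{1}{NM}\mathbb{E}[Z_{11}^2]$. -/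
/-!
The variance of the double sum is the sum of the covariances of all pairs `(Z n m, Z n' m')`.
These take only four values, according to whether `n = n'` and whether `m = m'`; the value for
`n ≠ n'`, `m ≠ m'` is zero by independence. Counting the pairs of each kind gives the formula.
-/

open MeasureTheory ProbabilityTheory Finset

lemma sum_sum_ite_eq_card_mul_add (ι : Type*) [Fintype ι] [DecidableEq ι] (a b : ℝ) :
    ∑ i : ι, ∑ j : ι, (if i = j then a else b) =
      Fintype.card ι * a + Fintype.card ι * (Fintype.card ι - 1) * b := by
  have row : ∀ i : ι, ∑ j : ι, (if i = j then a else b) = a + (Fintype.card ι - 1) * b := by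
    intro i
    have hcard : 1 ≤ Fintype.card ι := Fintype.card_pos_iff.mpr ⟨i⟩
    rw [Fintype.sum_eq_add_sum_compl i, if_pos rfl,
      sum_congr rfl fun j hj => if_neg (by simpa [eq_comm] using hj)]
    simp [card_compl, Nat.cast_sub hcard]
  simp only [row, sum_const, card_univ, nsmul_eq_mul]
  ring

theorem variance_sum_sum_of_covariance_eq_ite {Ω ι κ : Type*} [MeasurableSpace Ω]
    {μ : Measure Ω} [IsFiniteMeasure μ] [Fintype ι] [Fintype κ] [DecidableEq ι] [DecidableEq κ]
    {X : ι → κ → Ω → ℝ} (hX : ∀ i k, MemLp (X i k) 2 μ) {a b c d : ℝ}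
    (hcov : ∀ i j k l, cov[X i k, X j l; μ] =
      if i = j then (if k = l then a else b) else (if k = l then c else d)) :
    Var[fun ω => ∑ i, ∑ k, X i k ω; μ] =
      Fintype.card ι * Fintype.card κ * (a + (Fintype.card κ - 1) * b +
        (Fintype.card ι - 1) * c + (Fintype.card ι - 1) * (Fintype.card κ - 1) * d) := by
  have hprod : (fun ω => ∑ i, ∑ k, X i k ω) = fun ω => ∑ p : ι × κ, X p.1 p.2 ω := by
    simp only [Fintype.sum_prod_type]
  rw [hprod, variance_fun_sum (X := fun p : ι × κ => X p.1 p.2) fun p => hX p.1 p.2]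
  simp only [Fintype.sum_prod_type, hcov]
  rw [sum_congr rfl fun i _ => sum_comm]
  simp only [sum_ite_irrel, sum_sum_ite_eq_card_mul_add]
  ring

theorem stmt4_general {Ω : Type*} [MeasurableSpace Ω] (μ : Measure Ω)
    [IsProbabilityMeasure μ]
    (N M : ℕ)
    (Z : Fin N → Fin M → Ω → ℝ)
    (hL2 : ∀ n m, MemLp (Z n m) 2 μ)
    (hindep : ∀ n n' m m', n ≠ n' → m ≠ m' →
      IndepFun (Z n m) (Z n' m') μ)
    (h h12 h21 s : ℝ)
    (hmean : ∀ n m, ∫ ω, Z n m ω ∂μ = h)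
    (hsecond : ∀ n m, ∫ ω, (Z n m ω) ^ 2 ∂μ = s)
    (hcov12 : ∀ n m m', m ≠ m' → ∫ ω, Z n m ω * Z n m' ω ∂μ = h12)
    (hcov21 : ∀ n n' m, n ≠ n' → ∫ ω, Z n m ω * Z n' m ω ∂μ = h21) :
    variance (fun ω => (1 / (N * M : ℝ)) * ∑ n, ∑ m, Z n m ω) μ =
      ((1 - M - N : ℝ) / (N * M : ℝ)) * h ^ 2 + ((M - 1 : ℝ) / (N * M : ℝ)) * h12 +
        ((N - 1 : ℝ) / (N * M : ℝ)) * h21 + (1 / (N * M : ℝ)) * s := by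
  have hcov : ∀ n n' m m', cov[Z n m, Z n' m'; μ] =
      if n = n' then (if m = m' then s - h ^ 2 else h12 - h ^ 2)
      else (if m = m' then h21 - h ^ 2 else 0) := by
    intro n n' m m'
    by_cases hn : n = n' <;> by_cases hm : m = m'
    · subst hn hm
      simp only [covariance_eq_sub (hL2 n m) (hL2 n m), Pi.mul_apply, ← sq, hsecond, hmean,
        if_true]
    · subst hn
      simp only [covariance_eq_sub (hL2 n m) (hL2 n m'), Pi.mul_apply, hcov12 n m m' hm, hmean,
        if_true, if_neg hm, sq]
    · subst hm
      simp only [covariance_eq_sub (hL2 n m) (hL2 n' m), Pi.mul_apply, hcov21 n n' m hn, hmean,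
        if_true, if_neg hn, sq]
    · simp only [if_neg hn, if_neg hm]
      exact (hindep n n' m m' hn hm).covariance_eq_zero (hL2 n m) (hL2 n' m')
  rw [variance_const_mul, variance_sum_sum_of_covariance_eq_ite hL2 hcov, Fintype.card_fin,
    Fintype.card_fin]
  set t : ℝ := N * M
  have hcancel : (1 / t) ^ 2 * t = t⁻¹ := by rw [← div_self_mul_self' t]; ring
  rw [← mul_assoc, hcancel]
  ring

theorem stmt4 {Ω : Type*} [MeasurableSpace Ω] (μ : Measure Ω)
    [IsProbabilityMeasure μ]
    (N M : ℕ) (hN : 0 < N) (hM : 0 < M)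
    (Z : Fin N → Fin M → Ω → ℝ)
    (hL2 : ∀ n m, MemLp (Z n m) 2 μ)
    (hindep : ∀ n n' m m', n ≠ n' → m ≠ m' →
      IndepFun (Z n m) (Z n' m') μ)
    (h h12 h21 s : ℝ)
    (hmean : ∀ n m, ∫ ω, Z n m ω ∂μ = h)
    (hsecond : ∀ n m, ∫ ω, (Z n m ω) ^ 2 ∂μ = s)
    (hcov12 : ∀ n m m', m ≠ m' → ∫ ω, Z n m ω * Z n m' ω ∂μ = h12)
    (hcov21 : ∀ n n' m, n ≠ n' → ∫ ω, Z n m ω * Z n' m ω ∂μ = h21) :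
    variance (fun ω => (1 / (N * M : ℝ)) * ∑ n, ∑ m, Z n m ω) μ =
      ((1 - M - N : ℝ) / (N * M : ℝ)) * h ^ 2 + ((M - 1 : ℝ) / (N * M : ℝ)) * h12 +
        ((N - 1 : ℝ) / (N * M : ℝ)) * h21 + (1 / (N * M : ℝ)) * s :=
  stmt4_general μ N M Z hL2 hindep h h12 h21 s hmean hsecond hcov12 hcov21
end

section
/- Let $X, Y, X_N, Y_N$ be as follows: $Y > 0$, $X$ constants, $X_N, Y_N$ square-integrable random variables with $\mathbb{E}[(X_N-X)^2] = O(N^{-p})$, $\mathbb{E}[(Y_N-Y)^2] = O(N^{-p})$, $\operatorname{Var}(Y_N) = O(N^{-p})$ and $\mathbb{E}[Y_N] \to Y$ as $N \to \infty$. Define $\zeta_N := \frac{X_N}{Y_N}\mathbf{1}_{\{Y_N > D\}}$ for a fixed constant $0 < D < Y$ (assumed to satisfy $D < \mathbb{E}[Y_N]$ for $N$ large). Then $\mathbb{E}\left[\left(\zeta_N - \frac{X}{Y}\right)^2\right] = O(N^{-p})$ as $N \to \infty$. -/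
open MeasureTheory ProbabilityTheory Filter Asymptotics

/-! On `{Y_N > D}` the denominator is at least `D`, so `(X_N / Y_N - X / Y)²` is bounded by a fixed
multiple of `(X_N - X)² + (Y_N - Y)²`. On `{Y_N ≤ D}` the error is `(X / Y)²`, and Chebyshev bounds
`P(Y_N ≤ D)` by `Var(Y_N) / (E Y_N - D)²`, where `E Y_N - D > (Y - D) / 2` for large `N`. -/

lemma div_sub_div_sq_le {a b x y D : ℝ} (hD : 0 < D) (hDb : D ≤ b) (hy : y ≠ 0) :
    (a / b - x / y) ^ 2 ≤ 2 / D ^ 2 * (a - x) ^ 2 + 2 * (x / y) ^ 2 / D ^ 2 * (b - y) ^ 2 := by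
  have hb : 0 < b := hD.trans_le hDb
  have hsplit : a / b - x / y = ((a - x) - x / y * (b - y)) / b := by
    field_simp
    ring
  calc (a / b - x / y) ^ 2 = ((a - x) - x / y * (b - y)) ^ 2 / b ^ 2 := by rw [hsplit, div_pow]
    _ ≤ (2 * (a - x) ^ 2 + 2 * (x / y * (b - y)) ^ 2) / D ^ 2 := by
      gcongr
      nlinarith [sq_nonneg ((a - x) + x / y * (b - y))]
    _ = 2 / D ^ 2 * (a - x) ^ 2 + 2 * (x / y) ^ 2 / D ^ 2 * (b - y) ^ 2 := by ring

section
variable {Ω : Type*} {U V : Ω → ℝ} {x y D : ℝ}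

lemma cutoff_div_sub_sq_le (hD : 0 < D) (hy : y ≠ 0) (ω : Ω) :
    (U ω / V ω * {ω | D < V ω}.indicator (fun _ => (1 : ℝ)) ω - x / y) ^ 2
      ≤ 2 / D ^ 2 * (U ω - x) ^ 2 + 2 * (x / y) ^ 2 / D ^ 2 * (V ω - y) ^ 2
        + {ω | V ω ≤ D}.indicator (fun _ => (x / y) ^ 2) ω := by
  by_cases hω : D < V ω
  · have hω' : ¬ V ω ≤ D := not_le.mpr hω
    simpa [Set.indicator, hω, hω'] using div_sub_div_sq_le hD hω.le hy
  · simp only [Set.indicator, Set.mem_ofPred_eq, hω, not_lt.mp hω, if_true, if_false, mul_zero,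
      zero_sub, neg_sq]
    have hU_nonneg : 0 ≤ 2 / D ^ 2 * (U ω - x) ^ 2 := by positivity
    have hV_nonneg : 0 ≤ 2 * (x / y) ^ 2 / D ^ 2 * (V ω - y) ^ 2 := by positivity
    linarith

variable [MeasurableSpace Ω] {μ : Measure Ω} [IsFiniteMeasure μ]

lemma measureReal_le_le_variance_div_sq (hV : MemLp V 2 μ) (hDV : D < μ[V]) :
    μ.real {ω | V ω ≤ D} ≤ variance V μ / (μ[V] - D) ^ 2 := by
  have hsub : {ω | V ω ≤ D} ⊆ {ω | μ[V] - D ≤ |V ω - μ[V]|} := fun ω (hω : V ω ≤ D) => by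
    rw [Set.mem_ofPred_eq, abs_sub_comm]
    exact (by linarith : μ[V] - D ≤ μ[V] - V ω).trans (le_abs_self _)
  calc μ.real {ω | V ω ≤ D}
      ≤ μ.real {ω | μ[V] - D ≤ |V ω - μ[V]|} := measureReal_mono hsub
    _ ≤ variance V μ / (μ[V] - D) ^ 2 :=
      ENNReal.toReal_le_of_le_ofReal (by have := variance_nonneg V μ; positivity)
        (meas_ge_le_variance_div_sq hV (sub_pos.mpr hDV))

theorem integral_cutoff_div_sub_sq_le (hU : MemLp U 2 μ) (hV : MemLp V 2 μ) (hD : 0 < D)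
    (hy : y ≠ 0) (hDV : D < μ[V]) :
    ∫ ω, (U ω / V ω * {ω | D < V ω}.indicator (fun _ => (1 : ℝ)) ω - x / y) ^ 2 ∂μ
      ≤ 2 / D ^ 2 * ∫ ω, (U ω - x) ^ 2 ∂μ + 2 * (x / y) ^ 2 / D ^ 2 * ∫ ω, (V ω - y) ^ 2 ∂μ
        + (x / y) ^ 2 / (μ[V] - D) ^ 2 * variance V μ := by
  have hS : NullMeasurableSet {ω | V ω ≤ D} μ :=
    nullMeasurableSet_le hV.aemeasurable aemeasurable_const
  have hU' : Integrable (fun ω => 2 / D ^ 2 * (U ω - x) ^ 2) μ :=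
    ((hU.sub (memLp_const x)).integrable_sq).const_mul _
  have hV' : Integrable (fun ω => 2 * (x / y) ^ 2 / D ^ 2 * (V ω - y) ^ 2) μ :=
    ((hV.sub (memLp_const y)).integrable_sq).const_mul _
  have hind : Integrable ({ω | V ω ≤ D}.indicator fun _ => (x / y) ^ 2) μ :=
    (integrable_const _).indicator₀ hS
  calc _ ≤ ∫ ω, (2 / D ^ 2 * (U ω - x) ^ 2 + 2 * (x / y) ^ 2 / D ^ 2 * (V ω - y) ^ 2
          + {ω | V ω ≤ D}.indicator (fun _ => (x / y) ^ 2) ω) ∂μ :=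
        integral_mono_of_nonneg (ae_of_all _ fun _ => sq_nonneg _) ((hU'.add hV').add hind)
          (ae_of_all _ (cutoff_div_sub_sq_le hD hy))
    _ = 2 / D ^ 2 * ∫ ω, (U ω - x) ^ 2 ∂μ + 2 * (x / y) ^ 2 / D ^ 2 * ∫ ω, (V ω - y) ^ 2 ∂μ
          + μ.real {ω | V ω ≤ D} * (x / y) ^ 2 := by
      rw [integral_add (f := fun ω => _ + _) (hU'.add hV') hind, integral_add hU' hV',
        integral_const_mul, integral_const_mul, integral_indicator₀ hS, setIntegral_const,
        smul_eq_mul]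
    _ ≤ 2 / D ^ 2 * ∫ ω, (U ω - x) ^ 2 ∂μ + 2 * (x / y) ^ 2 / D ^ 2 * ∫ ω, (V ω - y) ^ 2 ∂μ
          + variance V μ / (μ[V] - D) ^ 2 * (x / y) ^ 2 := by
      gcongr
      exact measureReal_le_le_variance_div_sq hV hDV
    _ = _ := by ring

end

theorem stmt7_general {Ω : Type*} [MeasurableSpace Ω] (μ : Measure Ω)
    [IsProbabilityMeasure μ]
    (X Y : ℝ) (p : ℝ)
    (XN YN : ℕ → Ω → ℝ)
    (hXL2 : ∀ N, MemLp (XN N) 2 μ) (hYL2 : ∀ N, MemLp (YN N) 2 μ)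
    (hXmse : (fun N : ℕ => ∫ ω, (XN N ω - X) ^ 2 ∂μ) =O[atTop]
      fun N : ℕ => (N : ℝ) ^ (-p))
    (hYmse : (fun N : ℕ => ∫ ω, (YN N ω - Y) ^ 2 ∂μ) =O[atTop]
      fun N : ℕ => (N : ℝ) ^ (-p))
    (hVar : (fun N : ℕ => variance (YN N) μ) =O[atTop] fun N : ℕ => (N : ℝ) ^ (-p))
    (hEY : Tendsto (fun N : ℕ => ∫ ω, YN N ω ∂μ) atTop (nhds Y))
    (D : ℝ) (hD0 : 0 < D) (hDY : D < Y) :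
    (fun N : ℕ => ∫ ω,
        ((XN N ω / YN N ω) * Set.indicator {ω | D < YN N ω} (fun _ => (1 : ℝ)) ω
          - X / Y) ^ 2 ∂μ) =O[atTop] fun N : ℕ => (N : ℝ) ^ (-p) := by
  have hmean : ∀ᶠ N in atTop, (Y + D) / 2 < ∫ ω, YN N ω ∂μ :=
    hEY.eventually (eventually_gt_nhds (by linarith))
  have hrate := ((hXmse.const_mul_left (2 / D ^ 2)).add
    (hYmse.const_mul_left (2 * (X / Y) ^ 2 / D ^ 2))).add
    (hVar.const_mul_left ((X / Y) ^ 2 / ((Y - D) / 2) ^ 2))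
  refine IsBigO.trans (IsBigO.of_bound' ?_) hrate
  filter_upwards [hmean] with N hN
  rw [Real.norm_of_nonneg (integral_nonneg fun _ => sq_nonneg _)]
  refine le_trans ?_ (le_abs_self _)
  refine (integral_cutoff_div_sub_sq_le (hXL2 N) (hYL2 N) hD0 (hD0.trans hDY).ne'
    (by linarith)).trans ?_
  have hgap : (Y - D) / 2 ≤ (∫ ω, YN N ω ∂μ) - D := by linarith
  have hvar_nonneg := variance_nonneg (YN N) μ
  gcongr

theorem stmt7 {Ω : Type*} [MeasurableSpace Ω] (μ : Measure Ω)
    [IsProbabilityMeasure μ]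
    (X Y : ℝ) (hY : 0 < Y) (p : ℝ) (hp : 0 < p)
    (XN YN : ℕ → Ω → ℝ)
    (hXL2 : ∀ N, MemLp (XN N) 2 μ) (hYL2 : ∀ N, MemLp (YN N) 2 μ)
    (hXmse : (fun N : ℕ => ∫ ω, (XN N ω - X) ^ 2 ∂μ) =O[atTop]
      fun N : ℕ => (N : ℝ) ^ (-p))
    (hYmse : (fun N : ℕ => ∫ ω, (YN N ω - Y) ^ 2 ∂μ) =O[atTop]
      fun N : ℕ => (N : ℝ) ^ (-p))
    (hVar : (fun N : ℕ => variance (YN N) μ) =O[atTop] fun N : ℕ => (N : ℝ) ^ (-p))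
    (hEY : Tendsto (fun N : ℕ => ∫ ω, YN N ω ∂μ) atTop (nhds Y))
    (D : ℝ) (hD0 : 0 < D) (hDY : D < Y) :
    (fun N : ℕ => ∫ ω,
        ((XN N ω / YN N ω) * Set.indicator {ω | D < YN N ω} (fun _ => (1 : ℝ)) ω
          - X / Y) ^ 2 ∂μ) =O[atTop] fun N : ℕ => (N : ℝ) ^ (-p) :=
  stmt7_general μ X Y p XN YN hXL2 hYL2 hXmse hYmse hVar hEY D hD0 hDY
end

section
/- Suppose numbers $h, h_\epsilon, h^{(1,2)}_\epsilon, h^{(2,1)}_\epsilon, h^{(1,1)}_\epsilon$ (for $\epsilon > 0$) satisfy $|h - h_\epsilon| \le C_0 \epsilon^2$, $|h^{(i,j)}_\epsilon - h^{(i,j)}_0| \le C_{ij}\epsilon^2$ for $(i,j) \in \{(1,2),(2,1),(1,1)\}$, and the variance formula $\operatorname{Var}(\widehat{h}_{\epsilon,N,N}) = \frac{1-2N}{N^2}h_\epsilon^2 + \frac{N-1}{N^2}h^{(1,2)}_\epsilon + \frac{N-1}{N^2}h^{(2,1)}_\epsilon + \frac{\epsilon^{-d}}{N^2}h^{(1,1)}_\epsilon$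 holds with $\mathbb{E}[\widehat{h}_{\epsilon,N,N}] = h_\epsilon$. If $d \le 4$ and $\epsilon = \epsilon_N = c N^{-\alpha}$ for some $c > 0$ and $1/4 \le \alpha \le 1/d$, then the mean square error satisfies $\mathbb{E}[(\widehat{h}_{\epsilon_N,N,N} - h)^2] = \operatorname{Var}(\widehat{h}_{\epsilon_N,N,N}) + (h_{\epsilon_N} - h)^2 = O(N^{-1})$ as $N \to \infty$. -/
/-! Split the mean square error into variance plus squared bias. Along `ε_N = c N^(-α) → 0`
the quantities `h_ε`, `h^(i,j)_ε` converge, hence stay bounded, so the first three variance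
terms are `O(N⁻¹)` through their coefficients alone. The last one is
`O(ε_N^(-d) N^(-2)) = O(N^(αd - 2))` and the squared bias is `O(ε_N⁴) = O(N^(-4α))`;
both are `O(N⁻¹)` precisely because `1/4 ≤ α ≤ 1/d`. -/

open MeasureTheory ProbabilityTheory Filter Asymptotics Topology

lemma integral_sub_const_sq_eq_variance_add {Ω : Type*} [MeasurableSpace Ω] {μ : Measure Ω}
    [IsProbabilityMeasure μ] {X : Ω → ℝ} (hX : MemLp X 2 μ) (a : ℝ) :
    ∫ ω, (X ω - a) ^ 2 ∂μ = variance X μ + (μ[X] - a) ^ 2 := by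
  have hmean : μ[fun ω => X ω - a] = μ[X] - a := by
    rw [integral_sub (hX.integrable one_le_two) (integrable_const a), integral_const]
    simp
  have hXa : MemLp (fun ω => X ω - a) 2 μ := hX.sub (memLp_const a)
  rw [← variance_sub_const hX.aestronglyMeasurable a, variance_eq_sub hXa, hmean]
  simp

lemma Asymptotics.IsBigO.mul_tendsto_nhds {α : Type*} {l : Filter α} {f g u : α → ℝ}
    {a : ℝ} (h : f =O[l] g) (hu : Tendsto u l (𝓝 a)) : (fun x => f x * u x) =O[l] g :=
  (h.mul (hu.isBigO_one ℝ)).congr_right fun _ => mul_one _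

lemma isBigO_natCast_rpow_rpow {a b : ℝ} (hab : a ≤ b) :
    (fun N : ℕ => (N : ℝ) ^ a) =O[atTop] fun N => (N : ℝ) ^ b := by
  refine IsBigO.of_bound 1 ?_
  filter_upwards [eventually_ge_atTop 1] with N hN
  rw [one_mul, Real.norm_of_nonneg (by positivity), Real.norm_of_nonneg (by positivity)]
  exact Real.rpow_le_rpow_of_exponent_le (by exact_mod_cast hN) hab

lemma isBigO_div_sq_of_isBigO_natCast {f : ℕ → ℝ} (hf : f =O[atTop] fun N => (N : ℝ)) :
    (fun N => f N / (N : ℝ) ^ 2) =O[atTop] fun N => (N : ℝ)⁻¹ := by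
  refine (hf.mul (isBigO_refl (fun N : ℕ => ((N : ℝ) ^ 2)⁻¹) atTop)).congr
    (fun N => (div_eq_mul_inv _ _).symm) fun N => ?_
  rcases eq_or_ne (N : ℝ) 0 with hN | hN
  · simp [hN]
  · field_simp

section Bandwidth

variable {c α : ℝ}

lemma tendsto_const_mul_natCast_rpow_neg (hc : 0 < c) (hα : 0 < α) :
    Tendsto (fun N : ℕ => c * (N : ℝ) ^ (-α)) atTop (𝓝[>] 0) := by
  refine tendsto_nhdsWithin_iff.2 ⟨?_, ?_⟩
  · simpa using ((tendsto_rpow_neg_atTop hα).comp tendsto_natCast_atTop_atTop).const_mul c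
  · filter_upwards [eventually_gt_atTop 0] with N hN
    exact mul_pos hc (Real.rpow_pos_of_pos (by exact_mod_cast hN) _)

lemma const_mul_natCast_rpow_neg_pow (N k : ℕ) :
    (c * (N : ℝ) ^ (-α)) ^ k = c ^ k * (N : ℝ) ^ (-(α * k)) := by
  rw [mul_pow, ← Real.rpow_natCast ((N : ℝ) ^ (-α)), ← Real.rpow_mul (Nat.cast_nonneg N),
    neg_mul]

lemma const_mul_natCast_rpow_neg_pow_isBigO_inv {k : ℕ} (hk : 1 ≤ α * k) :
    (fun N : ℕ => (c * (N : ℝ) ^ (-α)) ^ k) =O[atTop] fun N => (N : ℝ)⁻¹ := by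
  simp_rw [const_mul_natCast_rpow_neg_pow]
  refine ((isBigO_natCast_rpow_rpow (neg_le_neg hk)).const_mul_left _).congr_right ?_
  simp [Real.rpow_neg_one]

lemma inv_const_mul_natCast_rpow_neg_pow_isBigO {k : ℕ} (hk : α * k ≤ 1) :
    (fun N : ℕ => ((c * (N : ℝ) ^ (-α)) ^ k)⁻¹) =O[atTop] fun N => (N : ℝ) := by
  simp_rw [const_mul_natCast_rpow_neg_pow, mul_inv, ← Real.rpow_neg (Nat.cast_nonneg _), neg_neg]
  refine ((isBigO_natCast_rpow_rpow hk).const_mul_left _).congr_right ?_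
  simp

end Bandwidth

section Perturbation

variable {ι : Type*} {l : Filter ι} {ε : ι → ℝ} {f : ℝ → ℝ} {a C : ℝ} {k : ℕ}

lemma isBigO_comp_sub_of_abs_sub_le_mul_pow (hε : Tendsto ε l (𝓝[>] 0))
    (hf : ∀ x, 0 < x → |f x - a| ≤ C * x ^ k) :
    (fun i => f (ε i) - a) =O[l] fun i => ε i ^ k := by
  refine IsBigO.of_bound C ?_
  filter_upwards [hε.eventually self_mem_nhdsWithin] with i hi
  rw [Real.norm_eq_abs, Real.norm_eq_abs, abs_pow, abs_of_pos hi]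
  exact hf _ hi

lemma tendsto_comp_of_abs_sub_le_mul_pow (hε : Tendsto ε l (𝓝[>] 0)) (hk : k ≠ 0)
    (hf : ∀ x, 0 < x → |f x - a| ≤ C * x ^ k) :
    Tendsto (fun i => f (ε i)) l (𝓝 a) := by
  have hεk : Tendsto (fun i => ε i ^ k) l (𝓝 0) := by
    simpa [zero_pow hk] using (tendsto_nhds_of_tendsto_nhdsWithin hε).pow k
  exact tendsto_sub_nhds_zero_iff.1
    ((isBigO_comp_sub_of_abs_sub_le_mul_pow hε hf).trans_tendsto hεk)

end Perturbation

theorem stmt15_general {Ω : Type*} [MeasurableSpace Ω] (μ : Measure Ω)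
    [IsProbabilityMeasure μ]
    (d : ℕ)
    (h : ℝ) (hfun h12 h21 h11 : ℝ → ℝ)
    (est : ℝ → ℕ → Ω → ℝ)
    (hL2 : ∀ ε N, MemLp (est ε N) 2 μ)
    (C₀ C₁₂ C₂₁ C₁₁ : ℝ)
    (hmean : ∀ ε N, ∫ ω, est ε N ω ∂μ = hfun ε)
    (hbias : ∀ ε : ℝ, 0 < ε → |h - hfun ε| ≤ C₀ * ε ^ 2)
    (hb12 : ∀ ε : ℝ, 0 < ε → |h12 ε - h12 0| ≤ C₁₂ * ε ^ 2)
    (hb21 : ∀ ε : ℝ, 0 < ε → |h21 ε - h21 0| ≤ C₂₁ * ε ^ 2)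
    (hb11 : ∀ ε : ℝ, 0 < ε → |h11 ε - h11 0| ≤ C₁₁ * ε ^ 2)
    (hvar : ∀ ε : ℝ, 0 < ε → ∀ N : ℕ, 0 < N →
      variance (est ε N) μ =
        ((1 - 2 * (N : ℝ)) / (N : ℝ) ^ 2) * hfun ε ^ 2 +
          (((N : ℝ) - 1) / (N : ℝ) ^ 2) * h12 ε +
          (((N : ℝ) - 1) / (N : ℝ) ^ 2) * h21 ε +
          ((ε ^ d)⁻¹ / (N : ℝ) ^ 2) * h11 ε)
    (c α : ℝ) (hc : 0 < c) (hα₁ : 1 / 4 ≤ α) (hα₂ : α ≤ 1 / (d : ℝ)) :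
    (fun N : ℕ => ∫ ω, (est (c * (N : ℝ) ^ (-α)) N ω - h) ^ 2 ∂μ) =O[atTop]
      fun N : ℕ => ((N : ℝ))⁻¹ := by
  set ε : ℕ → ℝ := fun N => c * (N : ℝ) ^ (-α)
  have hε : Tendsto ε atTop (𝓝[>] 0) := tendsto_const_mul_natCast_rpow_neg hc (by linarith)
  have hbias' : ∀ x, 0 < x → |hfun x - h| ≤ C₀ * x ^ 2 := fun x hx =>
    abs_sub_comm h (hfun x) ▸ hbias x hx
  have hone : (fun _ : ℕ => (1 : ℝ)) =O[atTop] fun N => (N : ℝ) :=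
    (isLittleO_const_id_atTop 1).isBigO.comp_tendsto tendsto_natCast_atTop_atTop
  have hαd : α * d ≤ 1 := by
    rcases d.eq_zero_or_pos with rfl | hd
    · simp
    · rwa [le_div_iff₀ (by exact_mod_cast hd)] at hα₂
  have hcoef : (fun N : ℕ => ((N : ℝ) - 1) / (N : ℝ) ^ 2) =O[atTop] fun N => (N : ℝ)⁻¹ :=
    isBigO_div_sq_of_isBigO_natCast ((isBigO_refl _ _).sub hone)
  have hconv : ∀ {g : ℝ → ℝ} {a C : ℝ}, (∀ x, 0 < x → |g x - a| ≤ C * x ^ 2) →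
      Tendsto (fun N => g (ε N)) atTop (𝓝 a) :=
    tendsto_comp_of_abs_sub_le_mul_pow hε two_ne_zero
  have hA := (isBigO_div_sq_of_isBigO_natCast
    (hone.sub ((isBigO_refl _ _).const_mul_left 2))).mul_tendsto_nhds ((hconv hbias').pow 2)
  have hB := hcoef.mul_tendsto_nhds (hconv hb12)
  have hC := hcoef.mul_tendsto_nhds (hconv hb21)
  have hD := (isBigO_div_sq_of_isBigO_natCast
    (inv_const_mul_natCast_rpow_neg_pow_isBigO (c := c) hαd)).mul_tendsto_nhds (hconv hb11)
  have hbias_sq : (fun N => (hfun (ε N) - h) ^ 2) =O[atTop] fun N => (N : ℝ)⁻¹ := by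
    refine ((isBigO_comp_sub_of_abs_sub_le_mul_pow hε hbias').pow 2).trans ?_
    simpa only [← pow_mul] using
      const_mul_natCast_rpow_neg_pow_isBigO_inv (c := c) (k := 4) (by push_cast; linarith)
  refine ((((hA.add hB).add hC).add hD).add hbias_sq).congr' ?_ EventuallyEq.rfl
  filter_upwards [hε.eventually self_mem_nhdsWithin, eventually_gt_atTop 0] with N hεN hN
  rw [integral_sub_const_sq_eq_variance_add (hL2 _ _), hmean, hvar _ hεN N hN]

theorem stmt15 {Ω : Type*} [MeasurableSpace Ω] (μ : Measure Ω)
    [IsProbabilityMeasure μ]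
    (d : ℕ) (hd1 : 1 ≤ d) (hd : d ≤ 4)
    (h : ℝ) (hfun h12 h21 h11 : ℝ → ℝ)
    (est : ℝ → ℕ → Ω → ℝ)
    (hL2 : ∀ ε N, MemLp (est ε N) 2 μ)
    (C₀ C₁₂ C₂₁ C₁₁ : ℝ)
    (hmean : ∀ ε N, ∫ ω, est ε N ω ∂μ = hfun ε)
    (hbias : ∀ ε : ℝ, 0 < ε → |h - hfun ε| ≤ C₀ * ε ^ 2)
    (hb12 : ∀ ε : ℝ, 0 < ε → |h12 ε - h12 0| ≤ C₁₂ * ε ^ 2)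
    (hb21 : ∀ ε : ℝ, 0 < ε → |h21 ε - h21 0| ≤ C₂₁ * ε ^ 2)
    (hb11 : ∀ ε : ℝ, 0 < ε → |h11 ε - h11 0| ≤ C₁₁ * ε ^ 2)
    (hvar : ∀ ε : ℝ, 0 < ε → ∀ N : ℕ, 0 < N →
      variance (est ε N) μ =
        ((1 - 2 * (N : ℝ)) / (N : ℝ) ^ 2) * hfun ε ^ 2 +
          (((N : ℝ) - 1) / (N : ℝ) ^ 2) * h12 ε +
          (((N : ℝ) - 1) / (N : ℝ) ^ 2) * h21 ε +
          ((ε ^ d)⁻¹ / (N : ℝ) ^ 2) * h11 ε)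
    (c α : ℝ) (hc : 0 < c) (hα₁ : 1 / 4 ≤ α) (hα₂ : α ≤ 1 / (d : ℝ)) :
    (fun N : ℕ => ∫ ω, (est (c * (N : ℝ) ^ (-α)) N ω - h) ^ 2 ∂μ) =O[atTop]
      fun N : ℕ => ((N : ℝ))⁻¹ :=
  stmt15_general μ d h hfun h12 h21 h11 est hL2 C₀ C₁₂ C₂₁ C₁₁ hmean hbias hb12 hb21 hb11 hvar c α
    hc hα₁ hα₂
end
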